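/- arXiv:2006.14757 — 2 statements merged into one kernel-verified Lean document; each statement's English description precedes it below -/
import Mathlib

section
/- For every n ≥ 1, (2α/h_{n-1}(t)) ∫_{-1}^{1} y·P_n(y,t)·P_{n-1}(y,t)·w(y,t)/(1-y^2) dy = n + r_n(t). -/
/-!
Integrate `(P_n P_{n-1} w)'` over `[-1, 1]`. The boundary terms vanish because `w (±1) = 0`, and
`w' = w (2t / y³ - 2αy / (1 - y²))`, which produces the two integrals of the statement. The
remaining term `∫ (P_n P_{n-1})' w` equals `n h_{n-1}`: `P_n' = n P_{n-1} + (degree < n - 1)` and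
`P_{n-1}'` has degree `< n`, so orthogonality kills everything except `n ∫ P_{n-1}² w`.
Analytically, `w` vanishes to infinite order at `0`, so `w / y^k` is continuous, and near `±1` the
integrand is dominated by `|y| (1 - y²)^(α - 1)`, the derivative of a function monotone on each
half of `[-1, 1]`.
-/

open Real Set Filter Topology MeasureTheory Polynomial

namespace Polynomial

variable {R : Type*} [CommRing R]

theorem degree_sub_C_coeff_mul_lt {u q : R[X]} (hq : q.Monic) (hu : u.degree ≤ q.natDegree) :
    (u - C (u.coeff q.natDegree) * q).degree < q.natDegree := by
  rw [degree_lt_iff_coeff_zero]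
  intro j hj
  rcases hj.eq_or_lt with rfl | hj
  · simp [hq.coeff_natDegree]
  · simp [coeff_eq_zero_of_degree_lt (hu.trans_lt (WithBot.coe_lt_coe.2 hj)),
      coeff_eq_zero_of_natDegree_lt hj]

variable (L : R[X] →ₗ[R] R) {P : ℕ → R[X]}

theorem map_mul_eq_zero_of_degree_lt (hmonic : ∀ j, (P j).Monic)
    (hdeg : ∀ j, (P j).natDegree = j) {q : R[X]} {k : ℕ} (horth : ∀ j < k, L (P j * q) = 0)
    {u : R[X]} (hu : u.degree < k) :
    L (u * q) = 0 := by
  induction k generalizing u with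
  | zero =>
    have hu0 : u = 0 := ext fun j => (degree_lt_iff_coeff_zero u 0).1 hu j j.zero_le
    simp [hu0]
  | succ k ih =>
    have hv := degree_sub_C_coeff_mul_lt (hmonic k) (u := u) (by
      rw [hdeg]; exact Order.le_of_lt_succ (by exact_mod_cast hu))
    rw [hdeg] at hv
    calc L (u * q) = L (C (u.coeff k) * (P k * q) + (u - C (u.coeff k) * P k) * q) :=
        congrArg L (by ring)
      _ = 0 := by
        rw [map_add, ← smul_eq_C_mul, map_smul, horth k k.lt_succ_self,
          ih (fun j hj => horth j (hj.trans k.lt_succ_self)) hv, smul_zero, zero_add]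

theorem map_derivative_mul_eq (hmonic : ∀ j, (P j).Monic) (hdeg : ∀ j, (P j).natDegree = j)
    (horth : ∀ j k, j ≠ k → L (P j * P k) = 0) (m : ℕ) :
    L (derivative (P (m + 1) * P m)) = (m + 1) * L (P m * P m) := by
  have hlow : L (derivative (P m) * P (m + 1)) = 0 := by
    refine map_mul_eq_zero_of_degree_lt L hmonic hdeg (fun j hj => horth j _ hj.ne) ?_
    have := natDegree_derivative_le (P m)
    rw [hdeg] at this
    exact degree_le_natDegree.trans_lt (by exact_mod_cast (show _ < m + 1 by omega))
  have hcoeff : (derivative (P (m + 1))).coeff m = m + 1 := by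
    have := (hmonic (m + 1)).coeff_natDegree
    rw [hdeg] at this
    simp [coeff_derivative, this]
  have hrem := degree_sub_C_coeff_mul_lt (hmonic m) (u := derivative (P (m + 1))) (by
    rw [hdeg]
    exact degree_le_of_natDegree_le ((natDegree_derivative_le _).trans (by rw [hdeg]; omega)))
  rw [hdeg, hcoeff] at hrem
  have hrest : L ((derivative (P (m + 1)) - C ((m : R) + 1) * P m) * P m) = 0 :=
    map_mul_eq_zero_of_degree_lt L hmonic hdeg (fun j hj => horth j m hj.ne) hrem
  calc L (derivative (P (m + 1) * P m))
      = L (C ((m : R) + 1) * (P m * P m)) +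
          L ((derivative (P (m + 1)) - C ((m : R) + 1) * P m) * P m) +
          L (derivative (P m) * P (m + 1)) := by
        rw [← map_add, ← map_add, derivative_mul]; exact congrArg L (by ring)
    _ = (m + 1) * L (P m * P m) := by
        rw [hrest, hlow, ← smul_eq_C_mul, map_smul, smul_eq_mul, add_zero, add_zero]

end Polynomial

theorem Real.exp_neg_le_factorial_div_pow {s : ℝ} (hs : 0 < s) (n : ℕ) :
    exp (-s) ≤ n.factorial / s ^ n := by
  rw [exp_neg, inv_le_comm₀ (exp_pos s) (by positivity), inv_div]
  exact pow_div_factorial_le_exp (x := s) hs.le n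

-- The case split matters: with `-t / 0 = 0` the formula would give `w 0 = 1`.
noncomputable def perturbedJacobiWeight (α t x : ℝ) : ℝ :=
  if x = 0 then 0 else (1 - x ^ 2) ^ α * exp (-t / x ^ 2)

section perturbedJacobiWeight

variable {α t x : ℝ}

theorem perturbedJacobiWeight_of_ne_zero (hx : x ≠ 0) :
    perturbedJacobiWeight α t x = (1 - x ^ 2) ^ α * exp (-t / x ^ 2) := if_neg hx

theorem perturbedJacobiWeight_zero : perturbedJacobiWeight α t 0 = 0 := if_pos rfl

theorem perturbedJacobiWeight_nonneg (hx : x ^ 2 ≤ 1) : 0 ≤ perturbedJacobiWeight α t x := by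
  unfold perturbedJacobiWeight
  split_ifs
  · rfl
  · have : 0 ≤ 1 - x ^ 2 := by linarith
    positivity

theorem perturbedJacobiWeight_le_rpow (ht : 0 ≤ t) (hx : x ^ 2 ≤ 1) :
    perturbedJacobiWeight α t x ≤ (1 - x ^ 2) ^ α := by
  have h0 : 0 ≤ 1 - x ^ 2 := by linarith
  unfold perturbedJacobiWeight
  split_ifs
  · positivity
  · refine mul_le_of_le_one_right (rpow_nonneg h0 α) (exp_le_one_iff.2 ?_)
    exact div_nonpos_of_nonpos_of_nonneg (by linarith) (sq_nonneg x)

theorem perturbedJacobiWeight_le_exp (hα : 0 ≤ α) (hx : x ^ 2 ≤ 1) (hx0 : x ≠ 0) :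
    perturbedJacobiWeight α t x ≤ exp (-t / x ^ 2) := by
  rw [perturbedJacobiWeight_of_ne_zero hx0]
  exact mul_le_of_le_one_left (exp_pos _).le
    (rpow_le_one (by linarith) (by linarith [sq_nonneg x]) hα)

theorem tendsto_perturbedJacobiWeight_div_pow (hα : 0 ≤ α) (ht : 0 < t) (k : ℕ) :
    Tendsto (fun x => perturbedJacobiWeight α t x / x ^ k) (𝓝 0) (𝓝 0) := by
  set c : ℝ := (k + 1).factorial / t ^ (k + 1)
  have hbound :
      ∀ᶠ x in 𝓝 (0 : ℝ), ‖perturbedJacobiWeight α t x / x ^ k‖ ≤ c * |x| ^ (k + 2) := by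
    filter_upwards [Icc_mem_nhds neg_one_lt_zero one_pos] with x hx
    have hx1 : x ^ 2 ≤ 1 := by nlinarith [hx.1, hx.2]
    rcases eq_or_ne x 0 with rfl | hx0
    · simp [perturbedJacobiWeight]
    have hxa : 0 < |x| := abs_pos.2 hx0
    -- `exp (-s) ≤ (k + 1)! / s ^ (k + 1)` at `s = t / x ^ 2` beats the pole of order `k`
    have hexp := exp_neg_le_factorial_div_pow (div_pos ht (pow_pos hxa 2)) (k + 1)
    rw [norm_div, norm_pow, Real.norm_eq_abs, Real.norm_eq_abs,
      abs_of_nonneg (perturbedJacobiWeight_nonneg hx1), div_le_iff₀ (by positivity)]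
    calc perturbedJacobiWeight α t x ≤ exp (-(t / |x| ^ 2)) := by
          rw [sq_abs, ← neg_div]; exact perturbedJacobiWeight_le_exp hα hx1 hx0
      _ ≤ (k + 1).factorial / (t / |x| ^ 2) ^ (k + 1) := hexp
      _ = c * |x| ^ (k + 2) * |x| ^ k := by
          rw [div_pow, ← pow_mul, div_div_eq_mul_div]; ring
  refine squeeze_zero_norm' hbound ?_
  exact (by fun_prop : Continuous fun x : ℝ => c * |x| ^ (k + 2)).tendsto' 0 0 (by simp)

theorem continuousAt_perturbedJacobiWeight_of_ne_zero (hα : 0 ≤ α) (hx : x ≠ 0) :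
    ContinuousAt (perturbedJacobiWeight α t) x := by
  have hformula : ContinuousAt (fun y => (1 - y ^ 2) ^ α * exp (-t / y ^ 2)) x :=
    (ContinuousAt.rpow_const (by fun_prop) (Or.inr hα)).mul
      (continuous_exp.continuousAt.comp (continuousAt_const.div (by fun_prop) (pow_ne_zero 2 hx)))
  refine hformula.congr ?_
  filter_upwards [isOpen_ne.mem_nhds hx] with y hy
  exact (perturbedJacobiWeight_of_ne_zero hy).symm

theorem continuous_perturbedJacobiWeight_div_pow (hα : 0 ≤ α) (ht : 0 < t) (k : ℕ) :
    Continuous fun x => perturbedJacobiWeight α t x / x ^ k := by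
  refine continuous_iff_continuousAt.2 fun x => ?_
  rcases eq_or_ne x 0 with rfl | hx
  · rw [ContinuousAt, perturbedJacobiWeight_zero, zero_div]
    exact tendsto_perturbedJacobiWeight_div_pow hα ht k
  · exact (continuousAt_perturbedJacobiWeight_of_ne_zero hα hx).div (by fun_prop)
      (pow_ne_zero k hx)

theorem continuous_perturbedJacobiWeight (hα : 0 ≤ α) (ht : 0 < t) :
    Continuous (perturbedJacobiWeight α t) := by
  simpa using continuous_perturbedJacobiWeight_div_pow hα ht 0

theorem hasDerivAt_one_sub_sq_rpow (hx : x ^ 2 < 1) :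
    HasDerivAt (fun y => (1 - y ^ 2) ^ α) (-2 * α * x * (1 - x ^ 2) ^ (α - 1)) x := by
  convert ((hasDerivAt_pow 2 x).const_sub 1).rpow_const (p := α) (Or.inl (by linarith)) using 1
  ring

theorem hasDerivAt_perturbedJacobiWeight (hα : 0 ≤ α) (ht : 0 < t) (hx : x ^ 2 < 1) :
    HasDerivAt (perturbedJacobiWeight α t)
      (perturbedJacobiWeight α t x * (2 * t / x ^ 3 - 2 * α * x / (1 - x ^ 2))) x := by
  rcases eq_or_ne x 0 with rfl | hx0
  · rw [hasDerivAt_iff_tendsto_slope, perturbedJacobiWeight_zero, zero_mul]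
    refine ((tendsto_perturbedJacobiWeight_div_pow hα ht 1).mono_left nhdsWithin_le_nhds).congr ?_
    intro y
    rw [slope_def_field, perturbedJacobiWeight_zero, sub_zero, sub_zero, pow_one]
  have hpos : 0 < 1 - x ^ 2 := by linarith
  have hformula : HasDerivAt (fun y => (1 - y ^ 2) ^ α * exp (-t / y ^ 2)) _ x :=
    (hasDerivAt_one_sub_sq_rpow (α := α) hx).mul
    (((hasDerivAt_const x (-t)).div (hasDerivAt_pow 2 x) (pow_ne_zero 2 hx0)).exp)
  have hlocal :
      (fun y => (1 - y ^ 2) ^ α * exp (-t / y ^ 2)) =ᶠ[𝓝 x] perturbedJacobiWeight α t := by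
    filter_upwards [isOpen_ne.mem_nhds hx0] with y hy
    exact (perturbedJacobiWeight_of_ne_zero hy).symm
  refine (hformula.congr_of_eventuallyEq hlocal.symm).congr_deriv ?_
  rw [perturbedJacobiWeight_of_ne_zero hx0, rpow_sub_one hpos.ne', Pi.div_apply]
  field_simp
  ring

theorem intervalIntegrable_mul_one_sub_sq_rpow (hα : 0 < α) :
    IntervalIntegrable (fun x => x * (1 - x ^ 2) ^ (α - 1)) volume (-1) 1 := by
  -- a derivative of one sign on each half of `[-1, 1]` is integrable there
  set g : ℝ → ℝ := fun x => -(1 - x ^ 2) ^ α / (2 * α)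
  have hg : ∀ x, x ^ 2 < 1 → HasDerivAt g (x * (1 - x ^ 2) ^ (α - 1)) x := fun x hx => by
    refine ((hasDerivAt_one_sub_sq_rpow hx).neg.div_const (2 * α)).congr_deriv ?_
    field_simp
  have hgc : Continuous g :=
    (((continuous_rpow_const hα.le).comp (by fun_prop : Continuous fun x : ℝ => 1 - x ^ 2)).neg
      ).div_const _
  have hleft : IntervalIntegrable (fun x => x * (1 - x ^ 2) ^ (α - 1)) volume (-1) 0 := by
    have h := intervalIntegral.intervalIntegrable_deriv_of_nonneg (a := -1) (b := 0)
      (g := fun x => -g x) hgc.neg.continuousOn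
      (fun x hx => (hg x (by simp at hx; nlinarith [hx.1, hx.2])).neg)
      fun x hx => by
        simp at hx
        exact neg_nonneg.2 (mul_nonpos_of_nonpos_of_nonneg hx.2.le
          (rpow_nonneg (by nlinarith [hx.1, hx.2]) _))
    simpa only [Pi.neg_def, neg_neg] using h.neg
  have hright : IntervalIntegrable (fun x => x * (1 - x ^ 2) ^ (α - 1)) volume 0 1 :=
    intervalIntegral.intervalIntegrable_deriv_of_nonneg hgc.continuousOn
      (fun x hx => hg x (by simp at hx; nlinarith [hx.1, hx.2]))
      fun x hx => by
        simp at hx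
        exact mul_nonneg hx.1.le (rpow_nonneg (by nlinarith [hx.1, hx.2]) _)
  exact hleft.trans hright

theorem intervalIntegrable_mul_perturbedJacobiWeight_div (hα : 0 < α) (ht : 0 < t)
    {f : ℝ → ℝ} (hf : Continuous f) :
    IntervalIntegrable (fun x => x * (f x * perturbedJacobiWeight α t x) / (1 - x ^ 2))
      volume (-1) 1 := by
  obtain ⟨C, hC⟩ :=
    isCompact_Icc.exists_bound_of_continuousOn (hf.continuousOn (s := Icc (-1 : ℝ) 1))
  have hC0 : 0 ≤ C := (norm_nonneg _).trans (hC 0 (by norm_num))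
  refine ((intervalIntegrable_mul_one_sub_sq_rpow hα).abs.const_mul C).mono_fun' ?_ ?_
  · exact ((continuous_id.mul (hf.mul (continuous_perturbedJacobiWeight hα.le ht))).measurable.div
      (by fun_prop : Continuous fun x : ℝ => 1 - x ^ 2).measurable).aestronglyMeasurable
  filter_upwards [ae_restrict_mem measurableSet_uIoc] with x hx
  rw [uIoc_of_le (by norm_num)] at hx
  have hx1 : x ^ 2 ≤ 1 := by nlinarith [hx.1, hx.2]
  rcases hx1.eq_or_lt with h1 | h1
  · simp only [h1, sub_self, div_zero, norm_zero]
    positivity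
  have hpos : 0 < 1 - x ^ 2 := by linarith
  simp only [norm_div, norm_mul, Real.norm_eq_abs]
  rw [abs_of_nonneg (perturbedJacobiWeight_nonneg hx1), abs_of_pos hpos, abs_mul,
    abs_of_nonneg (rpow_nonneg hpos.le _), rpow_sub_one hpos.ne']
  calc |x| * (|f x| * perturbedJacobiWeight α t x) / (1 - x ^ 2)
      ≤ |x| * (C * (1 - x ^ 2) ^ α) / (1 - x ^ 2) := by
        gcongr
        · exact perturbedJacobiWeight_nonneg hx1
        · exact hC x ⟨hx.1.le, hx.2⟩
        · exact perturbedJacobiWeight_le_rpow ht.le hx1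
    _ = C * (|x| * ((1 - x ^ 2) ^ α / (1 - x ^ 2))) := by ring

theorem integral_mul_perturbedJacobiWeight_div_one_sub_sq (hα : 0 < α) (ht : 0 < t)
    {f f' : ℝ → ℝ} (hf : ∀ x, HasDerivAt f (f' x) x) (hf' : Continuous f') :
    2 * α * ∫ x in (-1 : ℝ)..1, x * (f x * perturbedJacobiWeight α t x) / (1 - x ^ 2) =
      (∫ x in (-1 : ℝ)..1, f' x * perturbedJacobiWeight α t x) +
        2 * t * ∫ x in (-1 : ℝ)..1, f x * perturbedJacobiWeight α t x / x ^ 3 := by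
  set w := perturbedJacobiWeight α t
  have hfc : Continuous f := continuous_iff_continuousAt.2 fun x => (hf x).continuousAt
  have hwc : Continuous w := continuous_perturbedJacobiWeight hα.le ht
  have hI₁ : IntervalIntegrable (fun x => f' x * w x) volume (-1) 1 :=
    (hf'.mul hwc).intervalIntegrable _ _
  have hI₂ : IntervalIntegrable (fun x => f x * w x / x ^ 3) volume (-1) 1 := by
    simp only [mul_div_assoc]
    exact (hfc.mul (continuous_perturbedJacobiWeight_div_pow hα.le ht 3)).intervalIntegrable _ _
  have hI₃ := intervalIntegrable_mul_perturbedJacobiWeight_div hα ht hfc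
  have hendpoint : ∀ x : ℝ, x ^ 2 = 1 → w x = 0 := fun x hx => by
    simp [w, perturbedJacobiWeight, hx, zero_rpow hα.ne']
  have hftc := intervalIntegral.integral_eq_sub_of_hasDerivAt_of_le (f := fun x => f x * w x)
    (f' := fun x => f' x * w x + 2 * t * (f x * w x / x ^ 3) -
      2 * α * (x * (f x * w x) / (1 - x ^ 2)))
    (by norm_num) (hfc.mul hwc).continuousOn
    (fun x hx => ((hf x).mul (hasDerivAt_perturbedJacobiWeight hα.le ht
      (by nlinarith [hx.1, hx.2]))).congr_deriv (by ring))
    ((hI₁.add (hI₂.const_mul _)).sub (hI₃.const_mul _))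
  rw [intervalIntegral.integral_sub (hI₁.add (hI₂.const_mul _)) (hI₃.const_mul _),
    intervalIntegral.integral_add hI₁ (hI₂.const_mul _), intervalIntegral.integral_const_mul,
    intervalIntegral.integral_const_mul,
    hendpoint 1 (by norm_num), hendpoint (-1) (by norm_num)] at hftc
  linarith

end perturbedJacobiWeight


noncomputable def polynomialMoment {w : ℝ → ℝ} (hw : Continuous w) (a b : ℝ) :
    ℝ[X] →ₗ[ℝ] ℝ where
  toFun u := ∫ x in a..b, u.eval x * w x
  map_add' u v := by
    simp only [eval_add, add_mul]
    exact intervalIntegral.integral_add ((u.continuous.mul hw).intervalIntegrable _ _)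
      ((v.continuous.mul hw).intervalIntegrable _ _)
  map_smul' c u := by
    simp only [eval_smul, smul_eq_mul, mul_assoc, intervalIntegral.integral_const_mul,
      RingHom.id_apply]

theorem polynomialMoment_apply {w : ℝ → ℝ} (hw : Continuous w) (a b : ℝ) (u : ℝ[X]) :
    polynomialMoment hw a b u = ∫ x in a..b, u.eval x * w x := rfl

theorem stmt_4_general
    (α t : ℝ) (hα : 0 < α) (ht : 0 < t)
    (w : ℝ → ℝ)
    (hw : ∀ x : ℝ, x ≠ 0 → w x = (1 - x ^ 2) ^ α * Real.exp (-t / x ^ 2))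
    (hw0 : w 0 = 0)
    (P : ℕ → Polynomial ℝ)
    (hmonic : ∀ n, (P n).Monic)
    (hdeg : ∀ n, (P n).natDegree = n)
    (h : ℕ → ℝ)
    (hpos : ∀ n, 0 < h n)
    (horth : ∀ j k, (∫ x in (-1:ℝ)..1, (P j).eval x * (P k).eval x * w x)
      = if j = k then h j else 0)
    (r : ℕ → ℝ)
    (hr : ∀ n : ℕ, 1 ≤ n → r n = 2 * t / h (n - 1) *
      ∫ y in (-1:ℝ)..1, (P n).eval y * (P (n - 1)).eval y * w y / y ^ 3)
    :
    ∀ n : ℕ, 1 ≤ n →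
      (2 * α / h (n - 1)) *
          (∫ y in (-1:ℝ)..1, y * ((P n).eval y * (P (n - 1)).eval y * w y) / (1 - y ^ 2))
        = (n : ℝ) + r n := by
  intro n hn
  obtain ⟨m, rfl⟩ : ∃ m, n = m + 1 := ⟨n - 1, by omega⟩
  obtain rfl : w = perturbedJacobiWeight α t := funext fun x => by
    rcases eq_or_ne x 0 with rfl | hx
    · rw [hw0, perturbedJacobiWeight_zero]
    · rw [hw x hx, perturbedJacobiWeight_of_ne_zero hx]
  set L := polynomialMoment (continuous_perturbedJacobiWeight hα.le ht) (-1) 1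
  have hL : ∀ j k, L (P j * P k) = if j = k then h j else 0 := fun j k => by
    rw [polynomialMoment_apply, ← horth]
    simp only [eval_mul]
  have hderiv := map_derivative_mul_eq L hmonic hdeg (fun j k hjk => by rw [hL, if_neg hjk]) m
  rw [hL, if_pos rfl, polynomialMoment_apply] at hderiv
  have hibp := integral_mul_perturbedJacobiWeight_div_one_sub_sq hα ht
    (P (m + 1) * P m).hasDerivAt (derivative (P (m + 1) * P m)).continuous
  simp only [eval_mul] at hibp
  rw [hr _ hn, Nat.add_sub_cancel, Nat.cast_succ, div_mul_eq_mul_div, hibp, hderiv, add_div,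
    mul_div_cancel_right₀ _ (hpos m).ne']
  ring

theorem stmt_4
    (α t : ℝ) (hα : 0 < α) (ht : 0 < t)
    (w : ℝ → ℝ)
    (hw : ∀ x : ℝ, x ≠ 0 → w x = (1 - x ^ 2) ^ α * Real.exp (-t / x ^ 2))
    (hw0 : w 0 = 0)
    (P : ℕ → Polynomial ℝ)
    (hmonic : ∀ n, (P n).Monic)
    (hdeg : ∀ n, (P n).natDegree = n)
    (h : ℕ → ℝ)
    (hpos : ∀ n, 0 < h n)
    (horth : ∀ j k, (∫ x in (-1:ℝ)..1, (P j).eval x * (P k).eval x * w x)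
      = if j = k then h j else 0)
    (r : ℕ → ℝ) (hr0 : r 0 = 0)
    (hr : ∀ n : ℕ, 1 ≤ n → r n = 2 * t / h (n - 1) *
      ∫ y in (-1:ℝ)..1, (P n).eval y * (P (n - 1)).eval y * w y / y ^ 3)
    :
    ∀ n : ℕ, 1 ≤ n →
      (2 * α / h (n - 1)) *
          (∫ y in (-1:ℝ)..1, y * ((P n).eval y * (P (n - 1)).eval y * w y) / (1 - y ^ 2))
        = (n : ℝ) + r n :=
  stmt_4_general α t hα ht w hw hw0 P hmonic hdeg h hpos horth r hr
end

section
/- For every n ≥ 0, [1-(-1)^n]·t + (2n+1+2α)·β_n(t) - 2·p(n,t) = n + r_n(t), where β_0(t):=0, r_0(t):=0, and p(n,t) is the coefficient of x^{n-2} in P_n(x,t) (with p(0,t)=p(1,t)=0). -/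
/-! Differentiate `P_n P_{n-1} (1 - x²) w` and integrate over `[-1, 1]`: the boundary terms
vanish, and since `w'/w = -2αx/(1 - x²) + 2t/x³` the integrand is a polynomial against `w`
plus `2t (1 - x²) P_n P_{n-1} w / x³`. The polynomial part is read off by orthogonality
from `(1 - x²) P_n' + n x P_n` and `(1 - x²) P_{n-1}' + (n - 1) x P_{n-1}`, which have degree less
than `n` because the evenness of `w` forces `P_n(-x) = (-1)ⁿ P_n(x)`. The singular part is
`r_n h_{n-1}` minus `2t ∫ P_n P_{n-1} w / x`, and the latter is `2t h_{n-1}` for odd `n`, `0` for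
even `n`. -/

open Polynomial MeasureTheory Set Filter Topology

namespace Polynomial

variable {K : Type*} [Field K]

theorem coeff_comp_neg_X (p : K[X]) (k : ℕ) : (p.comp (-X)).coeff k = (-1) ^ k * p.coeff k := by
  induction p using Polynomial.induction_on' with
  | add p q hp hq => simp [add_comp, hp, hq, mul_add]
  | monomial i a =>
    rw [monomial_comp, neg_pow, ← C_1, ← C_neg, ← C_pow, mul_left_comm, coeff_C_mul,
      C_mul_X_pow_eq_monomial, coeff_monomial]
    split_ifs with hik
    · rw [hik]
    · simp

theorem degree_sub_C_coeff_mul_lt_s6 {Q p : K[X]} {m : ℕ} (hp : p.Monic) (hpm : p.natDegree = m)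
    (hQ : Q.degree < ↑(m + 1)) : (Q - C (Q.coeff m) * p).degree < m := by
  rw [degree_lt_iff_coeff_zero] at hQ ⊢
  intro N hN
  rcases hN.eq_or_lt with rfl | hlt
  · simp [← hpm, hp.coeff_natDegree]
  · simp [hQ N hlt, coeff_eq_zero_of_natDegree_lt (hpm ▸ hlt)]

theorem coeff_succ_derivative_mul_one_sub_X_sq_add (Q : K[X]) (c : K) (N : ℕ) :
    (derivative Q * (1 - X ^ 2) + C c * (X * Q)).coeff (N + 1)
      = (N + 2) * Q.coeff (N + 2) + (c - N) * Q.coeff N := by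
  rcases N with _ | N <;> simp [mul_sub, coeff_derivative, coeff_X_mul, coeff_mul_X_pow'] <;> ring

theorem natDegree_derivative_mul_one_sub_X_sq_add_le {Q : K[X]} {n : ℕ} (hQ : Q.natDegree ≤ n) :
    (derivative Q * (1 - X ^ 2) + C (n : K) * (X * Q)).natDegree ≤ n := by
  rw [natDegree_le_iff_coeff_eq_zero]
  rintro (_ | N) hN
  · omega
  rw [coeff_succ_derivative_mul_one_sub_X_sq_add, coeff_eq_zero_of_natDegree_lt (by omega)]
  rcases (Nat.lt_succ_iff.mp hN).eq_or_lt with rfl | hlt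
  · ring
  · rw [coeff_eq_zero_of_natDegree_lt (by omega)]; ring

theorem natDegree_derivative_mul_one_sub_X_sq_add_le_of_coeff_eq_zero {Q : K[X]} {n : ℕ}
    (hQ : Q.natDegree ≤ n + 1) (hc : Q.coeff n = 0) :
    (derivative Q * (1 - X ^ 2) + C ((n : K) + 1) * (X * Q)).natDegree ≤ n := by
  rw [natDegree_le_iff_coeff_eq_zero]
  rintro (_ | N) hN
  · omega
  rw [coeff_succ_derivative_mul_one_sub_X_sq_add, coeff_eq_zero_of_natDegree_lt (by omega)]
  obtain rfl | rfl | hlt : N = n ∨ N = n + 1 ∨ n + 1 < N := by omega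
  · rw [hc]; ring
  · push_cast; ring
  · rw [coeff_eq_zero_of_natDegree_lt (by omega)]; ring

theorem _root_.LinearMap.map_C_mul (L : K[X] →ₗ[K] K) (c : K) (Q : K[X]) :
    L (C c * Q) = c * L Q := by
  rw [← smul_eq_C_mul, map_smul, smul_eq_mul]

end Polynomial

namespace OrthogonalPolynomials

variable {K : Type*} [Field K] {L : K[X] →ₗ[K] K} {P : ℕ → K[X]} {h : ℕ → K}

variable (hmonic : ∀ n, (P n).Monic) (hdeg : ∀ n, (P n).natDegree = n)
include hmonic hdeg

theorem coeff_self_eq_one (n : ℕ) : (P n).coeff n = 1 := by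
  simpa [hdeg n] using (hmonic n).coeff_natDegree

variable (horth : ∀ j k, L (P j * P k) = if j = k then h j else 0)
include horth

theorem map_mul_eq_zero_of_degree_lt {Q : K[X]} {k : ℕ} (hQ : Q.degree < k) :
    L (Q * P k) = 0 := by
  suffices ∀ m : ℕ, ∀ Q : K[X], Q.degree < m → m ≤ k → L (Q * P k) = 0 from
    this k Q hQ le_rfl
  intro m
  induction m with
  | zero => simp
  | succ m ih =>
    intro Q hQ hmk
    have hR := degree_sub_C_coeff_mul_lt_s6 (hmonic m) (hdeg m) hQ
    rw [← sub_add_cancel Q (C (Q.coeff m) * P m), add_mul, map_add, ih _ hR (by omega),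
      mul_assoc, L.map_C_mul, horth, if_neg (by omega), mul_zero, zero_add]

theorem map_mul_eq_coeff_mul {Q : K[X]} {k : ℕ} (hQ : Q.natDegree ≤ k) :
    L (Q * P k) = Q.coeff k * h k := by
  have hR := degree_sub_C_coeff_mul_lt_s6 (hmonic k) (hdeg k)
    ((degree_le_of_natDegree_le hQ).trans_lt (WithBot.coe_lt_coe.mpr k.lt_succ_self))
  rw [← sub_add_cancel Q (C (Q.coeff k) * P k), add_mul, map_add,
    map_mul_eq_zero_of_degree_lt hmonic hdeg horth hR, mul_assoc, L.map_C_mul, horth, if_pos rfl,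
    zero_add, coeff_add, coeff_C_mul, coeff_eq_zero_of_degree_lt hR, coeff_self_eq_one hmonic hdeg]
  ring

theorem map_X_mul_mul_succ (m : ℕ) : L (X * P m * P (m + 1)) = h (m + 1) := by
  rw [map_mul_eq_coeff_mul hmonic hdeg horth, coeff_X_mul, coeff_self_eq_one hmonic hdeg, one_mul]
  rw [natDegree_X_mul (hmonic m).ne_zero, hdeg]

theorem map_derivative_mul_one_sub_X_sq_mul_succ (m : ℕ) :
    L (derivative (P m) * (1 - X ^ 2) * P (m + 1)) = -(m * h (m + 1)) := by
  have hT : L ((derivative (P m) * (1 - X ^ 2) + C (m : K) * (X * P m)) * P (m + 1)) = 0 := by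
    rw [map_mul_eq_coeff_mul hmonic hdeg horth, coeff_eq_zero_of_natDegree_lt, zero_mul]
    · exact (natDegree_derivative_mul_one_sub_X_sq_add_le (hdeg m).le).trans_lt m.lt_succ_self
    · exact (natDegree_derivative_mul_one_sub_X_sq_add_le (hdeg m).le).trans m.le_succ
  rw [add_mul, map_add, mul_assoc (C _), L.map_C_mul, map_X_mul_mul_succ hmonic hdeg horth] at hT
  linear_combination hT

variable (hh : ∀ k, h k ≠ 0)
include hh

theorem eq_zero_of_forall_map_mul_eq_zero {D : K[X]} {n : ℕ} (hD : D.degree < n)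
    (horthD : ∀ j < n, L (D * P j) = 0) : D = 0 := by
  by_contra hD0
  have hj : D.natDegree < n := (natDegree_lt_iff_degree_lt hD0).mpr hD
  have := horthD _ hj
  rw [map_mul_eq_coeff_mul hmonic hdeg horth le_rfl] at this
  exact mul_ne_zero (leadingCoeff_ne_zero.mpr hD0) (hh _) this

variable (heven : ∀ Q, L (Q.comp (-X)) = L Q)
include heven

theorem comp_neg_X_eq (n : ℕ) : (P n).comp (-X) = C ((-1) ^ n) * P n := by
  refine sub_eq_zero.mp (eq_zero_of_forall_map_mul_eq_zero hmonic hdeg horth hh (n := n) ?_ ?_)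
  · rw [degree_lt_iff_coeff_zero]
    intro N hN
    rcases hN.eq_or_lt with rfl | hlt
    · rw [coeff_sub, coeff_comp_neg_X, coeff_C_mul, coeff_self_eq_one hmonic hdeg, sub_self]
    · rw [coeff_sub, coeff_comp_neg_X, coeff_C_mul,
        coeff_eq_zero_of_natDegree_lt ((hdeg n).trans_lt hlt)]
      ring
  · intro j hj
    have hPj : ((P j).comp (-X)).degree < n := by
      rw [degree_comp_neg_X, degree_eq_natDegree (hmonic j).ne_zero, hdeg j]
      exact_mod_cast hj
    rw [sub_mul, map_sub, mul_assoc, L.map_C_mul, horth, if_neg hj.ne', mul_zero, sub_zero,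
      ← heven, mul_comp_neg_X, comp_neg_X_comp_neg_X, mul_comm,
      map_mul_eq_zero_of_degree_lt hmonic hdeg horth hPj]

theorem coeff_eq_zero_of_odd [CharZero K] {n k : ℕ} (hnk : Odd (n + k)) : (P n).coeff k = 0 := by
  have hk := congrArg (coeff · k) (comp_neg_X_eq hmonic hdeg horth hh heven n)
  simp only [coeff_comp_neg_X, coeff_C_mul] at hk
  rcases Nat.even_or_odd n with hn | hn
  · rw [hn.neg_one_pow, ((Nat.odd_add'.mp hnk).mpr hn).neg_one_pow] at hk
    simpa [CharZero.neg_eq_self_iff] using hk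
  · rw [hn.neg_one_pow, ((Nat.odd_add.mp hnk).mp hn).neg_one_pow] at hk
    simpa [CharZero.eq_neg_self_iff] using hk

theorem map_derivative_succ_mul_one_sub_X_sq_mul [CharZero K] (m : ℕ) :
    L (derivative (P (m + 1)) * (1 - X ^ 2) * P m)
      = ((m : K) + 1 + 2 * (P (m + 1)).coeff (m - 1)) * h m - ((m : K) + 1) * h (m + 1) := by
  set T := derivative (P (m + 1)) * (1 - X ^ 2) + C ((m : K) + 1) * (X * P (m + 1))
  have hTdeg : T.natDegree ≤ m := natDegree_derivative_mul_one_sub_X_sq_add_le_of_coeff_eq_zero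
    (hdeg _).le (coeff_eq_zero_of_odd hmonic hdeg horth hh heven (by simp))
  have hTcoeff : T.coeff m = (m : K) + 1 + 2 * (P (m + 1)).coeff (m - 1) := by
    rcases m with _ | m
    · simp [T, coeff_derivative, coeff_self_eq_one hmonic hdeg,
        coeff_eq_zero_of_odd hmonic hdeg horth hh heven (n := 1) (k := 0) (by simp)]
    · rw [coeff_succ_derivative_mul_one_sub_X_sq_add, coeff_self_eq_one hmonic hdeg]
      push_cast; ring
  have hT := map_mul_eq_coeff_mul hmonic hdeg horth hTdeg
  rw [hTcoeff, add_mul, map_add, mul_assoc (C _), L.map_C_mul, mul_right_comm X,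
    map_X_mul_mul_succ hmonic hdeg horth] at hT
  linear_combination hT

theorem map_derivative_mul_one_sub_X_sq_sub [CharZero K] (m : ℕ) (b : K) :
    L (derivative (P (m + 1) * P m) * (1 - X ^ 2) - C b * (X * (P (m + 1) * P m)))
      = ((m : K) + 1 + 2 * (P (m + 1)).coeff (m - 1)) * h m - (2 * m + 1 + b) * h (m + 1) := by
  have hsplit : derivative (P (m + 1) * P m) * (1 - X ^ 2) - C b * (X * (P (m + 1) * P m))
      = derivative (P (m + 1)) * (1 - X ^ 2) * P m + derivative (P m) * (1 - X ^ 2) * P (m + 1)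
        - C b * (X * P m * P (m + 1)) := by
    rw [derivative_mul]; ring
  rw [hsplit, map_sub, map_add, L.map_C_mul, map_X_mul_mul_succ hmonic hdeg horth,
    map_derivative_succ_mul_one_sub_X_sq_mul hmonic hdeg horth hh heven,
    map_derivative_mul_one_sub_X_sq_mul_succ hmonic hdeg horth]
  ring

theorem exists_eq_X_mul_of_odd [CharZero K] {n : ℕ} (hn : Odd n) :
    ∃ R, P n = X * R ∧ R.natDegree + 1 = n := by
  obtain ⟨R, hR⟩ := X_dvd_iff.mpr (coeff_eq_zero_of_odd hmonic hdeg horth hh heven (k := 0) hn)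
  refine ⟨R, hR, ?_⟩
  rw [← hdeg n, hR, natDegree_X_mul]
  rintro rfl
  exact (hmonic n).ne_zero (by simpa using hR)

theorem exists_mul_eq_X_mul [CharZero K] (m : ℕ) :
    ∃ U, P (m + 1) * P m = X * U ∧ L U = if Even m then h m else 0 := by
  rcases Nat.even_or_odd m with hm | hm
  · obtain ⟨R, hR, hRdeg⟩ := exists_eq_X_mul_of_odd hmonic hdeg horth hh heven hm.add_one
    refine ⟨R * P m, by rw [hR, mul_assoc], ?_⟩
    rw [map_mul_eq_coeff_mul hmonic hdeg horth (by omega), if_pos hm, ← coeff_X_mul, ← hR,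
      coeff_self_eq_one hmonic hdeg, one_mul]
  · obtain ⟨R, hR, hRdeg⟩ := exists_eq_X_mul_of_odd hmonic hdeg horth hh heven hm
    refine ⟨R * P (m + 1), by rw [hR]; ring, ?_⟩
    rw [map_mul_eq_coeff_mul hmonic hdeg horth (by omega), if_neg (Nat.not_even_iff_odd.mpr hm),
      ← coeff_X_mul, ← hR, coeff_eq_zero_of_natDegree_lt (by rw [hdeg]; omega), zero_mul]

end OrthogonalPolynomials

open OrthogonalPolynomials

noncomputable def integralAgainst {w : ℝ → ℝ} (hw : IntervalIntegrable w volume (-1) 1) :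
    ℝ[X] →ₗ[ℝ] ℝ where
  toFun Q := ∫ x in (-1 : ℝ)..1, Q.eval x * w x
  map_add' p q := by
    simp only [eval_add, add_mul]
    exact intervalIntegral.integral_add (hw.continuousOn_mul p.continuous.continuousOn)
      (hw.continuousOn_mul q.continuous.continuousOn)
  map_smul' c p := by simp [mul_assoc, intervalIntegral.integral_const_mul]

section integralAgainst

variable {w : ℝ → ℝ} (hw : IntervalIntegrable w volume (-1) 1)

theorem integralAgainst_apply (Q : ℝ[X]) :
    integralAgainst hw Q = ∫ x in (-1 : ℝ)..1, Q.eval x * w x := rfl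

theorem integralAgainst_comp_neg_X (heven : ∀ x, w (-x) = w x) (Q : ℝ[X]) :
    integralAgainst hw (Q.comp (-X)) = integralAgainst hw Q := by
  simp only [integralAgainst_apply, eval_comp, eval_neg, eval_X]
  simpa [heven] using
    intervalIntegral.integral_comp_neg (a := -1) (b := 1) (fun x => Q.eval x * w x)

theorem integralAgainst_X_sq_mul {v : ℝ → ℝ} (hv : IntervalIntegrable v volume (-1) 1)
    (hwv : ∀ x, x ^ 2 * v x = w x) (Q : ℝ[X]) :
    integralAgainst hv (X ^ 2 * Q) = integralAgainst hw Q := by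
  simp only [integralAgainst_apply, eval_mul, eval_pow, eval_X, ← hwv]
  congr 1; funext x; ring

theorem integral_eval_mul_eval_mul_div_pow_three
    (hv : IntervalIntegrable (fun x => w x / x ^ 2) volume (-1) 1) {A B U : ℝ[X]}
    (hU : A * B = X * U) :
    ∫ y in (-1 : ℝ)..1, A.eval y * B.eval y * w y / y ^ 3 = integralAgainst hv U := by
  rw [integralAgainst_apply]
  congr 1; funext y
  have hUy := congrArg (eval y) hU
  rw [eval_mul, eval_mul, eval_X] at hUy
  rw [hUy]
  rcases eq_or_ne y 0 with rfl | hy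
  · simp
  · field_simp

end integralAgainst

theorem Real.exp_neg_le_two_div_sq {u : ℝ} (hu : 0 < u) : Real.exp (-u) ≤ 2 / u ^ 2 := by
  have := Real.pow_div_factorial_le_exp u hu.le 2
  rw [Real.exp_neg, inv_le_comm₀ (Real.exp_pos u) (by positivity)]
  simpa [div_div_eq_mul_div] using this

section Weight

variable {α t : ℝ} {w : ℝ → ℝ} (hα : 0 < α) (ht : 0 < t)
  (hw : ∀ x : ℝ, x ≠ 0 → w x = (1 - x ^ 2) ^ α * Real.exp (-t / x ^ 2)) (hw0 : w 0 = 0)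

include hw in
theorem weight_neg (x : ℝ) : w (-x) = w x := by
  rcases eq_or_ne x 0 with rfl | hx
  · rw [neg_zero]
  · rw [hw x hx, hw (-x) (neg_ne_zero.mpr hx), neg_sq]

include hα ht hw hw0 in
theorem abs_weight_div_sq_le {x : ℝ} (hx : |x| < 1) : |w x / x ^ 2| ≤ 2 * x ^ 2 / t ^ 2 := by
  rcases eq_or_ne x 0 with rfl | hx0
  · simp [hw0]
  have hx2 : 0 < x ^ 2 := by positivity
  have h1 : 0 ≤ 1 - x ^ 2 := by nlinarith [sq_abs x, abs_nonneg x]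
  have hrpow : (1 - x ^ 2) ^ α ≤ 1 := Real.rpow_le_one h1 (by linarith) hα.le
  have hexp : Real.exp (-t / x ^ 2) ≤ 2 * x ^ 4 / t ^ 2 := by
    calc Real.exp (-t / x ^ 2) ≤ 2 / (t / x ^ 2) ^ 2 := by
          rw [neg_div]; exact Real.exp_neg_le_two_div_sq (by positivity)
      _ = 2 * x ^ 4 / t ^ 2 := by field_simp
  rw [hw x hx0, abs_div, abs_of_pos hx2, abs_of_nonneg (by positivity), div_le_iff₀ hx2]
  calc (1 - x ^ 2) ^ α * Real.exp (-t / x ^ 2) ≤ 1 * (2 * x ^ 4 / t ^ 2) :=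
        mul_le_mul hrpow hexp (by positivity) zero_le_one
    _ = 2 * x ^ 2 / t ^ 2 * x ^ 2 := by ring

include hα ht hw hw0 in
theorem continuous_weight_div_sq : Continuous fun x => w x / x ^ 2 := by
  rw [continuous_iff_continuousAt]
  intro x
  rcases eq_or_ne x 0 with rfl | hx0
  · have hlim : Tendsto (fun x : ℝ => 2 * x ^ 2 / t ^ 2) (𝓝 0) (𝓝 0) := by
      simpa using ((continuous_pow 2).const_mul 2 |>.div_const (t ^ 2)).tendsto 0
    have hbound : ∀ᶠ x in 𝓝 (0 : ℝ), ‖w x / x ^ 2‖ ≤ 2 * x ^ 2 / t ^ 2 := by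
      filter_upwards [Metric.ball_mem_nhds (0 : ℝ) one_pos] with x hx
      exact abs_weight_div_sq_le hα ht hw hw0 (by simpa using hx)
    simpa [ContinuousAt, hw0] using squeeze_zero_norm' hbound hlim
  · have hformula :
        ContinuousAt (fun y : ℝ => (1 - y ^ 2) ^ α * Real.exp (-t / y ^ 2) / y ^ 2) x := by
      fun_prop (disch := first | positivity | exact Or.inr hα.le)
    refine hformula.congr ?_
    filter_upwards [isOpen_ne.mem_nhds hx0] with y hy
    rw [hw y hy]

include hα ht hw hw0 in
theorem continuous_weight : Continuous w := by
  have : w = fun x => x ^ 2 * (w x / x ^ 2) := by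
    funext x
    rcases eq_or_ne x 0 with rfl | hx0
    · simp [hw0]
    · field_simp
  rw [this]
  exact (continuous_pow 2).mul (continuous_weight_div_sq hα ht hw hw0)

include hw in
theorem hasDerivAt_one_sub_sq_mul_weight {x : ℝ} (hx : x ∈ Ioo (-1 : ℝ) 1) (hx0 : x ≠ 0) :
    HasDerivAt (fun y => (1 - y ^ 2) * w y)
      (-(2 + 2 * α) * x * w x + 2 * t * (1 - x ^ 2) * w x / x ^ 3) x := by
  have h1 : 0 < 1 - x ^ 2 := by nlinarith [hx.1, hx.2]
  have hbase : HasDerivAt (fun y : ℝ => 1 - y ^ 2) (-(2 * x)) x := by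
    simpa using (hasDerivAt_pow 2 x).const_sub 1
  have hexp : HasDerivAt (fun y : ℝ => Real.exp (-t / y ^ 2))
      (Real.exp (-t / x ^ 2) * (2 * t / x ^ 3)) x := by
    have hd : HasDerivAt (fun y : ℝ => -t / y ^ 2) (2 * t / x ^ 3) x := by
      refine ((hasDerivAt_const x (-t)).div (hasDerivAt_pow 2 x)
        (pow_ne_zero 2 hx0)).congr_deriv ?_
      field_simp
      ring
    exact hd.exp
  have hformula := (hbase.rpow_const (p := α + 1) (Or.inl h1.ne')).mul hexp
  have hev : (fun y => (1 - y ^ 2) * w y) =ᶠ[𝓝 x]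
      fun y => (1 - y ^ 2) ^ (α + 1) * Real.exp (-t / y ^ 2) := by
    filter_upwards [isOpen_ne.mem_nhds hx0, (isOpen_lt continuous_const (by fun_prop) :
      IsOpen {y : ℝ | 0 < 1 - y ^ 2}).mem_nhds h1] with y hy hy1
    rw [hw y hy, Real.rpow_add_one hy1.ne']; ring
  refine (hformula.congr_of_eventuallyEq hev).congr_deriv ?_
  rw [hw x hx0, add_sub_cancel_right, Real.rpow_add_one h1.ne']
  field_simp
  ring

include hα ht hw hw0 in
theorem integralAgainst_derivative_mul_one_sub_X_sq_sub (hwi : IntervalIntegrable w volume (-1) 1)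
    (hvi : IntervalIntegrable (fun x => w x / x ^ 2) volume (-1) 1) (U : ℝ[X]) :
    integralAgainst hwi (derivative (X * U) * (1 - X ^ 2) - C (2 + 2 * α) * (X * (X * U)))
      + 2 * t * (integralAgainst hvi U - integralAgainst hwi U) = 0 := by
  have hsing :
      integralAgainst hvi (U * (1 - X ^ 2)) = integralAgainst hvi U - integralAgainst hwi U := by
    rw [mul_sub, mul_one, map_sub, mul_comm, integralAgainst_X_sq_mul hwi hvi]
    intro x
    rcases eq_or_ne x 0 with rfl | hx
    · simp [hw0]
    · field_simp
  rw [← hsing]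
  set B := derivative (X * U) * (1 - X ^ 2) - C (2 + 2 * α) * (X * (X * U))
  have hderiv : ∀ x ∈ Ioo (-1 : ℝ) 1 \ {0},
      HasDerivAt (fun x => (X * U).eval x * ((1 - x ^ 2) * w x))
        (B.eval x * w x + 2 * t * ((U * (1 - X ^ 2)).eval x * (w x / x ^ 2))) x := by
    rintro x ⟨hx, hx0 : x ≠ 0⟩
    refine (((X * U).hasDerivAt x).mul
      (hasDerivAt_one_sub_sq_mul_weight hw hx hx0)).congr_deriv ?_
    simp only [B, derivative_mul, eval_sub, eval_add, eval_mul, eval_X, eval_C, eval_one, eval_pow,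
      derivative_X, one_mul]
    field_simp
    ring
  have hcont : Continuous fun x => (X * U).eval x * ((1 - x ^ 2) * w x) :=
    (X * U).continuous.mul ((by fun_prop : Continuous fun x : ℝ => 1 - x ^ 2).mul
      (continuous_weight hα ht hw hw0))
  have hBi := hwi.continuousOn_mul B.continuous.continuousOn
  have hUi := (hvi.continuousOn_mul (U * (1 - X ^ 2)).continuous.continuousOn).const_mul (2 * t)
  have hFTC := integral_eq_of_hasDerivAt_off_countable_of_le _ _ (by norm_num)
    (countable_singleton 0) hcont.continuousOn hderiv (hBi.add hUi)
  rw [intervalIntegral.integral_add hBi hUi, intervalIntegral.integral_const_mul] at hFTC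
  simpa [integralAgainst_apply] using hFTC

end Weight

theorem stmt_6
    (α t : ℝ) (hα : 0 < α) (ht : 0 < t)
    (w : ℝ → ℝ)
    (hw : ∀ x : ℝ, x ≠ 0 → w x = (1 - x ^ 2) ^ α * Real.exp (-t / x ^ 2))
    (hw0 : w 0 = 0)
    (P : ℕ → Polynomial ℝ)
    (hmonic : ∀ n, (P n).Monic)
    (hdeg : ∀ n, (P n).natDegree = n)
    (h : ℕ → ℝ)
    (hpos : ∀ n, 0 < h n)
    (horth : ∀ j k, (∫ x in (-1:ℝ)..1, (P j).eval x * (P k).eval x * w x)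
      = if j = k then h j else 0)
    (r : ℕ → ℝ) (hr0 : r 0 = 0)
    (hr : ∀ n : ℕ, 1 ≤ n → r n = 2 * t / h (n - 1) *
      ∫ y in (-1:ℝ)..1, (P n).eval y * (P (n - 1)).eval y * w y / y ^ 3)
    (β : ℕ → ℝ) (hβ0 : β 0 = 0)
    (hβ : ∀ n : ℕ, 1 ≤ n → β n = h n / h (n - 1))
    (p : ℕ → ℝ) (hp0 : p 0 = 0) (hp1 : p 1 = 0)
    (hp : ∀ n : ℕ, 2 ≤ n → p n = (P n).coeff (n - 2))
    :
    ∀ n : ℕ,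
      (1 - (-1 : ℝ) ^ n) * t + (2 * (n : ℝ) + 1 + 2 * α) * β n - 2 * p n
        = (n : ℝ) + r n := by
  rintro (_ | m)
  · simp [hβ0, hp0, hr0]
  have hwi : IntervalIntegrable w volume (-1) 1 :=
    (continuous_weight hα ht hw hw0).intervalIntegrable _ _
  have hvi : IntervalIntegrable (fun x => w x / x ^ 2) volume (-1) 1 :=
    (continuous_weight_div_sq hα ht hw hw0).intervalIntegrable _ _
  have horthL : ∀ j k, integralAgainst hwi (P j * P k) = if j = k then h j else 0 := by
    simpa [integralAgainst_apply] using horth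
  have hh : ∀ k, h k ≠ 0 := fun k => (hpos k).ne'
  have heven := integralAgainst_comp_neg_X hwi (weight_neg hw)
  obtain ⟨U, hU, hLU⟩ := exists_mul_eq_X_mul hmonic hdeg horthL hh heven m
  have hidentity := integralAgainst_derivative_mul_one_sub_X_sq_sub hα ht hw hw0 hwi hvi U
  rw [← hU, map_derivative_mul_one_sub_X_sq_sub hmonic hdeg horthL hh heven, hLU] at hidentity
  have hrm : r (m + 1) * h m = 2 * t * integralAgainst hvi U := by
    rw [hr _ (by omega), Nat.add_sub_cancel, integral_eval_mul_eval_mul_div_pow_three hvi hU]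
    field_simp [hh m]
  have hpm : p (m + 1) = (P (m + 1)).coeff (m - 1) := by
    rcases m with _ | m
    · rw [hp1, coeff_eq_zero_of_odd hmonic hdeg horthL hh heven (by simp)]
    · exact hp _ (by omega)
  have hβm : β (m + 1) * h m = h (m + 1) := by
    rw [hβ _ (by omega), Nat.add_sub_cancel, div_mul_cancel₀ _ (hh m)]
  have hsign : (1 - (-1 : ℝ) ^ (m + 1)) * h m = 2 * if Even m then h m else 0 := by
    rcases Nat.even_or_odd m with hm | hm
    · rw [if_pos hm, hm.add_one.neg_one_pow]; ring
    · rw [if_neg (Nat.not_even_iff_odd.mpr hm), hm.add_one.neg_one_pow]; ring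
  rw [hpm]
  apply mul_right_cancel₀ (hh m)
  push_cast
  linear_combination t * hsign + (2 * (m : ℝ) + 3 + 2 * α) * hβm - hrm - hidentity
end
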